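/- For every fixed real γ ≥ 1 and fixed perimeter P > 0, as n → +∞ the fixed-perimeter area satisfies A^P(γ, n) → (1/4)·(√(4γ² − 1)/(2γ + 1)²)·P². -/

import Mathlib

open Filter Topology

/-- The area of the triangle realizing the `n`-degree Pythagorean theorem
`a^n + (γa)^n = c^n` whose perimeter `a + γa + c` is fixed equal to `P`. -/
noncomputable def pythAreaP (P γ n : ℝ) : ℝ :=
  (P / (2 * (γ + 1 + (γ ^ n + 1) ^ (1 / n)))) ^ 2 *
    Real.sqrt (4 * γ ^ 2 - (γ ^ 2 + 1 - (γ ^ n + 1) ^ (2 / n)) ^ 2)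

lemma aux_tendsto_root (γ : ℝ) (hγ : 1 ≤ γ) :
    Tendsto (fun n : ℝ => (γ ^ n + 1) ^ (1 / n)) atTop (𝓝 γ) := by
  have hγ0 : (0:ℝ) < γ := lt_of_lt_of_le one_pos hγ
  have key : Tendsto (fun n : ℝ => Real.log (1 + γ ^ (-n)) / n) atTop (𝓝 0) := by
    apply squeeze_zero' (g := fun n => Real.log 2 / n)
    · filter_upwards [eventually_ge_atTop (0:ℝ)] with n hn
      apply div_nonneg _ hn
      apply Real.log_nonneg
      nlinarith [Real.rpow_pos_of_pos hγ0 (-n)]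
    · filter_upwards [eventually_gt_atTop (0:ℝ)] with n hn
      have h1 : γ ^ (-n) ≤ 1 := Real.rpow_le_one_of_one_le_of_nonpos hγ (by linarith)
      have h0 : (0:ℝ) < γ ^ (-n) := Real.rpow_pos_of_pos hγ0 (-n)
      have hll : Real.log (1 + γ ^ (-n)) ≤ Real.log 2 :=
        Real.log_le_log (by linarith) (by linarith)
      exact div_le_div_of_nonneg_right hll hn.le |>.trans_eq rfl
    · exact tendsto_const_nhds.div_atTop tendsto_id
  have hlog : Tendsto (fun n : ℝ => Real.log (γ ^ n + 1) * (1 / n)) atTop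
      (𝓝 (Real.log γ)) := by
    have heq : (fun n : ℝ => Real.log γ + Real.log (1 + γ ^ (-n)) / n) =ᶠ[atTop]
        (fun n : ℝ => Real.log (γ ^ n + 1) * (1 / n)) := by
      filter_upwards [eventually_gt_atTop (0:ℝ)] with n hn
      have hpos : (0:ℝ) < γ ^ n := Real.rpow_pos_of_pos hγ0 n
      have hpos2 : (0:ℝ) < 1 + γ ^ (-n) := by positivity
      have hfac : γ ^ n + 1 = γ ^ n * (1 + γ ^ (-n)) := by
        rw [mul_add, mul_one, ← Real.rpow_add hγ0]
        simp
      rw [hfac, Real.log_mul (ne_of_gt hpos) (ne_of_gt hpos2), Real.log_rpow hγ0]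
      field_simp
    have : Tendsto (fun n : ℝ => Real.log γ + Real.log (1 + γ ^ (-n)) / n) atTop
        (𝓝 (Real.log γ + 0)) := tendsto_const_nhds.add key
    rw [add_zero] at this
    exact this.congr' heq
  have heq2 : (fun n : ℝ => Real.exp (Real.log (γ ^ n + 1) * (1 / n))) =
      (fun n : ℝ => (γ ^ n + 1) ^ (1 / n)) := by
    funext n
    exact (Real.rpow_def_of_pos (by positivity) _).symm
  have := (Real.continuous_exp.tendsto _).comp hlog
  rw [show Real.exp (Real.log γ) = γ from Real.exp_log hγ0] at this
  exact heq2 ▸ this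

theorem stmt_17 (γ P : ℝ) (hγ : 1 ≤ γ) (hP : 0 < P) :
    Tendsto (fun n : ℝ => pythAreaP P γ n) atTop
      (𝓝 (1 / 4 * (Real.sqrt (4 * γ ^ 2 - 1) / (2 * γ + 1) ^ 2) * P ^ 2)) := by
  have hγ0 : (0:ℝ) < γ := lt_of_lt_of_le one_pos hγ
  set F : ℝ → ℝ := fun t =>
    (P / (2 * (γ + 1 + t))) ^ 2 * Real.sqrt (4 * γ ^ 2 - (γ ^ 2 + 1 - t ^ 2) ^ 2)
    with hF
  have hcomp : (fun n : ℝ => pythAreaP P γ n) =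
      fun n : ℝ => F ((γ ^ n + 1) ^ (1 / n)) := by
    funext n
    simp only [hF, pythAreaP]
    congr 3
    rw [← Real.rpow_natCast ((γ ^ n + 1) ^ (1 / n)) 2, ← Real.rpow_mul (by positivity)]
    norm_num
    ring_nf
  have hcont : ContinuousAt F γ := by
    apply ContinuousAt.mul
    · apply ContinuousAt.pow
      apply ContinuousAt.div continuousAt_const (by fun_prop)
      nlinarith
    · exact Real.continuous_sqrt.continuousAt.comp (by fun_prop)
  have hlim := hcont.tendsto.comp (aux_tendsto_root γ hγ)
  rw [hcomp]
  convert hlim using 2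
  · rfl
  simp only [hF]
  rw [show 4 * γ ^ 2 - (γ ^ 2 + 1 - γ ^ 2) ^ 2 = 4 * γ ^ 2 - 1 by ring]
  have h2γ : (2 * γ + 1) ≠ 0 := by nlinarith
  field_simp
  ring
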